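/- Let s ≥ 1 be a natural number and let g : ℕ → ℕ be monotonically increasing such that its Grundy function satisfies G_g(y,z) = (y ⊕ (z+s)) − s for all y, z ∈ ℕ with y ≤ g(z). Define g_{−s} : ℕ → ℕ by g_{−s}(z) = g(z−s) for z ≥ s and g_{−s}(z) = g(0) for 0 ≤ z < s. Then the Grundy function of the chocolate bar game satisfies G_{g_{−s}}(y,z) = y ⊕ z for all y, z ∈ ℕ with y ≤ g_{−s}(z). -/

import Mathlib

/-- The minimum excluded value of a set of natural numbers. -/
noncomputable def mex (S : Set ℕ) : ℕ := sInf {n | n ∉ S}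

/-- The Grundy function of the chocolate bar game `CB(f,·,·)`:
`G_f(y,z) = mex({G_f(v,z) : v < y} ∪ {G_f(min(y, f w), w) : w < z})`. -/
noncomputable def grundy (f : ℕ → ℕ) (y z : ℕ) : ℕ :=
  mex ({x | ∃ v, ∃ _ : v < y, x = grundy f v z} ∪
       {x | ∃ w, ∃ _ : w < z, x = grundy f (min y (f w)) w})
termination_by (z, y)

/-!
Write `G` for the Grundy function of `g`. On every position `(y, z)` of `CB(g)` one has
`s ≤ y ⊕ (z + s)`: otherwise `G(y, z) = 0`, and nim arithmetic produces an option of `(y, z)`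
(or a position having `(y, z)` as an option) of value `0` as well. Hence
`G(y, z) + s = y ⊕ (z + s)` there, and rows `p ≤ g 0` satisfy `p ⊕ d < s` for all `d < s`.

In `CB(g₋ₛ)` one shows by induction that `y ⊕ z` is the mex of the values of the options of
`(y, z)`. The columns `z ≥ s` carry the positions of `CB(g)` moved `s` columns to the right, so
their values are those of `CB(g)` raised by `s`; they realise every value in `[s, y ⊕ z)` and
never `y ⊕ z`. The first `s` columns all have row bound `g 0`, so their values stay below `s`
and realise all of them.
-/

theorem mex_eq_of_forall_lt_mem {S : Set ℕ} {a : ℕ} (ha : a ∉ S) (hlt : ∀ n < a, n ∈ S) :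
    mex S = a :=
  (Nat.sInf_le ha).antisymm (le_csInf ⟨a, ha⟩ fun _ hb => not_lt.1 fun h => hb (hlt _ h))

theorem mem_of_lt_mex {S : Set ℕ} {n : ℕ} (h : n < mex S) : n ∈ S :=
  not_not.1 (Nat.notMem_of_lt_sInf h)

theorem mex_notMem_of_finite {S : Set ℕ} (hS : S.Finite) : mex S ∉ S :=
  Nat.sInf_mem hS.infinite_compl.nonempty

section Grundy

variable (f : ℕ → ℕ)

def grundyOptions (y z : ℕ) : Set ℕ :=
  {x | ∃ v, ∃ _ : v < y, x = grundy f v z} ∪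
    {x | ∃ w, ∃ _ : w < z, x = grundy f (min y (f w)) w}

theorem grundy_eq_mex (y z : ℕ) : grundy f y z = mex (grundyOptions f y z) := by
  rw [grundy, grundyOptions]

theorem grundyOptions_finite (y z : ℕ) : (grundyOptions f y z).Finite := by
  refine (((Set.finite_Iio y).image fun v => grundy f v z).union
    ((Set.finite_Iio z).image fun w => grundy f (min y (f w)) w)).subset ?_
  rintro x (⟨v, hv, rfl⟩ | ⟨w, hw, rfl⟩)
  exacts [Or.inl ⟨v, hv, rfl⟩, Or.inr ⟨w, hw, rfl⟩]

theorem grundy_notMem_grundyOptions (y z : ℕ) : grundy f y z ∉ grundyOptions f y z :=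
  grundy_eq_mex f y z ▸ mex_notMem_of_finite (grundyOptions_finite f y z)

theorem mem_grundyOptions_of_lt_grundy {u y z : ℕ} (h : u < grundy f y z) :
    u ∈ grundyOptions f y z :=
  mem_of_lt_mex (grundy_eq_mex f y z ▸ h)

theorem grundy_ne_of_lt_left {v y z : ℕ} (h : v < y) : grundy f v z ≠ grundy f y z :=
  fun heq => grundy_notMem_grundyOptions f y z (Or.inl ⟨v, h, heq.symm⟩)

theorem grundy_ne_of_lt_right {w y z : ℕ} (h : w < z) :
    grundy f (min y (f w)) w ≠ grundy f y z :=
  fun heq => grundy_notMem_grundyOptions f y z (Or.inr ⟨w, h, heq.symm⟩)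

theorem grundy_ne_of_lt_right_of_le {w y z : ℕ} (hy : y ≤ f w) (h : w < z) :
    grundy f y w ≠ grundy f y z := by
  simpa only [min_eq_left hy] using grundy_ne_of_lt_right f (y := y) h

theorem grundy_zero_right (y : ℕ) : grundy f y 0 = y := by
  induction y using Nat.strong_induction_on with
  | _ y ih =>
    rw [grundy_eq_mex]
    apply mex_eq_of_forall_lt_mem
    · rintro (⟨v, hv, hval⟩ | ⟨w, hw, _⟩)
      · exact hv.ne (hval.trans (ih v hv)).symm
      · exact Nat.not_lt_zero w hw
    · exact fun n hn => Or.inl ⟨n, hn, (ih n hn).symm⟩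

def xorOptions (y z : ℕ) : Set ℕ :=
  {x | ∃ v, ∃ _ : v < y, x = v ^^^ z} ∪ {x | ∃ w, ∃ _ : w < z, x = min y (f w) ^^^ w}

theorem grundy_eq_xor_of_mex_xorOptions
    (hmex : ∀ y z, y ≤ f z → mex (xorOptions f y z) = y ^^^ z) {y z : ℕ} (hyz : y ≤ f z) :
    grundy f y z = y ^^^ z := by
  induction z using Nat.strong_induction_on generalizing y with
  | _ z ihz =>
  induction y using Nat.strong_induction_on with
  | _ y ihy =>
  rw [grundy_eq_mex, ← hmex y z hyz, grundyOptions, xorOptions]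
  congr 2 <;> ext x
  · exact exists_congr fun v => exists_congr fun hv => by rw [ihy v hv (hv.le.trans hyz)]
  · exact exists_congr fun w => exists_congr fun hw => by rw [ihz w hw (min_le_right _ _)]

end Grundy

theorem Nat.xor_lt_of_xor_lt_of_xor_lt {a b c : ℕ} (hab : a ^^^ b < c) (hac : a ^^^ c < b) :
    b ^^^ c < a := by
  have hc : c = (a ^^^ c) ^^^ a := by rw [Nat.xor_comm a c, Nat.xor_xor_cancel_right]
  rw [hc] at hab
  rcases Nat.lt_xor_cases hab with h | h
  · rw [Nat.xor_comm a b, Nat.xor_xor_cancel_right] at h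
    exact absurd h hac.asymm
  · rwa [Nat.xor_comm a b, Nat.xor_assoc, Nat.xor_xor_cancel_left] at h

section ShiftedNim

variable {s : ℕ} {g : ℕ → ℕ}

theorem le_xor_add_of_le (hmono : Monotone g)
    (hG : ∀ y z, y ≤ g z → grundy g y z = (y ^^^ (z + s)) - s) {m t : ℕ} (hm : m ≤ g t) :
    s ≤ m ^^^ (t + s) := by
  by_contra! hlt
  have hzero : grundy g m t = 0 := by rw [hG m t hm]; omega
  rcases lt_or_ge (s ^^^ (t + s)) m with hv | hv
  · apply grundy_ne_of_lt_left g hv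
    rw [hzero, hG _ t (hv.le.trans hm), Nat.xor_xor_cancel_right, Nat.sub_self]
  have hne : m ^^^ s ≠ t + s := by
    rintro h
    rw [← h, Nat.xor_xor_cancel_left] at hlt
    exact hlt.false
  rcases lt_or_ge (t + s) (m ^^^ s) with hw | hw
  · obtain ⟨t', ht'⟩ := Nat.exists_eq_add_of_le' (show s ≤ m ^^^ s by omega)
    have htt' : t < t' := by omega
    apply grundy_ne_of_lt_right_of_le g hm htt'
    rw [hzero, hG m t' (hm.trans (hmono htt'.le)), ← ht', Nat.xor_xor_cancel_left, Nat.sub_self]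
  · have := Nat.xor_lt_of_xor_lt_of_xor_lt hlt (lt_of_le_of_ne hw hne)
    rw [Nat.xor_comm] at this
    exact this.not_ge hv

def shiftBy (s : ℕ) (g : ℕ → ℕ) (z : ℕ) : ℕ :=
  if s ≤ z then g (z - s) else g 0

theorem shiftBy_of_lt {z : ℕ} (h : z < s) : shiftBy s g z = g 0 :=
  if_neg h.not_ge

theorem shiftBy_add (t : ℕ) : shiftBy s g (t + s) = g t := by
  rw [shiftBy, if_pos (Nat.le_add_left s t), Nat.add_sub_cancel]

theorem grundy_add_eq_xor (hmono : Monotone g)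
    (hG : ∀ y z, y ≤ g z → grundy g y z = (y ^^^ (z + s)) - s) {m t : ℕ} (hm : m ≤ g t) :
    grundy g m t + s = m ^^^ (t + s) := by
  have := le_xor_add_of_le hmono hG hm
  rw [hG m t hm]
  omega

theorem xor_lt_of_le_apply_zero (hmono : Monotone g)
    (hG : ∀ y z, y ≤ g z → grundy g y z = (y ^^^ (z + s)) - s) {p d : ℕ} (hp : p ≤ g 0)
    (hd : d < s) : p ^^^ d < s := by
  by_contra! h
  obtain ⟨t, ht⟩ := Nat.exists_eq_add_of_le' h
  have := grundy_add_eq_xor hmono hG (hp.trans (hmono t.zero_le))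
  rw [← ht, Nat.xor_xor_cancel_left] at this
  omega

theorem xor_notMem_xorOptions_shiftBy (hmono : Monotone g)
    (hG : ∀ y z, y ≤ g z → grundy g y z = (y ^^^ (z + s)) - s) {y z : ℕ}
    (hyz : y ≤ shiftBy s g z) : y ^^^ z ∉ xorOptions (shiftBy s g) y z := by
  rintro (⟨v, hv, hval⟩ | ⟨w, hw, hval⟩)
  · exact hv.ne' (Nat.xor_left_injective hval)
  rcases lt_or_ge z s with hzs | hzs
  · rw [shiftBy_of_lt (hw.trans hzs), ← shiftBy_of_lt (g := g) hzs, min_eq_left hyz] at hval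
    exact hw.ne' (Nat.xor_right_injective hval)
  obtain ⟨t, rfl⟩ := Nat.exists_eq_add_of_le' hzs
  rw [shiftBy_add] at hyz
  rcases lt_or_ge w s with hws | hws
  · have hsmall := xor_lt_of_le_apply_zero hmono hG (min_le_right y (g 0)) hws
    have hbig := le_xor_add_of_le hmono hG hyz
    rw [shiftBy_of_lt hws] at hval
    omega
  obtain ⟨t', rfl⟩ := Nat.exists_eq_add_of_le' hws
  rw [shiftBy_add, ← grundy_add_eq_xor hmono hG hyz,
    ← grundy_add_eq_xor hmono hG (min_le_right _ _), Nat.add_right_cancel_iff] at hval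
  exact grundy_ne_of_lt_right g (by omega) hval.symm

theorem mem_xorOptions_shiftBy (hmono : Monotone g)
    (hG : ∀ y z, y ≤ g z → grundy g y z = (y ^^^ (z + s)) - s) {u y z : ℕ}
    (hyz : y ≤ shiftBy s g z) (hu : u < y ^^^ z) : u ∈ xorOptions (shiftBy s g) y z := by
  rcases lt_or_ge z s with hzs | hzs
  · rcases Nat.lt_xor_cases hu with hv | hw
    · exact Or.inl ⟨u ^^^ z, hv, by rw [Nat.xor_xor_cancel_right]⟩
    · refine Or.inr ⟨u ^^^ y, hw, ?_⟩
      rw [shiftBy_of_lt (hw.trans hzs), ← shiftBy_of_lt (g := g) hzs, min_eq_left hyz,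
        Nat.xor_comm u y, Nat.xor_xor_cancel_left]
  obtain ⟨t, rfl⟩ := Nat.exists_eq_add_of_le' hzs
  rw [shiftBy_add] at hyz
  rcases lt_or_ge u s with hus | hus
  · have hw := xor_lt_of_le_apply_zero hmono hG (min_le_right y (g 0)) hus
    refine Or.inr ⟨min y (g 0) ^^^ u, by omega, ?_⟩
    rw [shiftBy_of_lt hw, Nat.xor_xor_cancel_left]
  obtain ⟨u', rfl⟩ := Nat.exists_eq_add_of_le' hus
  have hu' : u' < grundy g y t := by
    have := grundy_add_eq_xor hmono hG hyz
    omega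
  rcases mem_grundyOptions_of_lt_grundy g hu' with ⟨v, hv, hval⟩ | ⟨w, hw, hval⟩
  · refine Or.inl ⟨v, hv, ?_⟩
    rw [hval, grundy_add_eq_xor hmono hG (hv.le.trans hyz)]
  · refine Or.inr ⟨w + s, by omega, ?_⟩
    rw [hval, shiftBy_add, grundy_add_eq_xor hmono hG (min_le_right _ _)]

theorem grundy_shiftBy (hmono : Monotone g)
    (hG : ∀ y z, y ≤ g z → grundy g y z = (y ^^^ (z + s)) - s) {y z : ℕ}
    (hyz : y ≤ shiftBy s g z) : grundy (shiftBy s g) y z = y ^^^ z :=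
  grundy_eq_xor_of_mex_xorOptions _ (fun _ _ h => mex_eq_of_forall_lt_mem
    (xor_notMem_xorOptions_shiftBy hmono hG h) fun _ => mem_xorOptions_shiftBy hmono hG h) hyz

end ShiftedNim

theorem stmt_18_general (s : ℕ) (g : ℕ → ℕ) (hmono : Monotone g)
    (hG : ∀ y z : ℕ, y ≤ g z → grundy g y z = (y ^^^ (z + s)) - s)
    (gms : ℕ → ℕ) (hgms : ∀ z, gms z = if s ≤ z then g (z - s) else g 0)
    (y z : ℕ) (hyz : y ≤ gms z) :
    grundy gms y z = y ^^^ z := by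
  obtain rfl : gms = shiftBy s g := funext hgms
  exact grundy_shiftBy hmono hG hyz

theorem stmt_18 (s : ℕ) (hs : 1 ≤ s) (g : ℕ → ℕ) (hmono : Monotone g)
    (hG : ∀ y z : ℕ, y ≤ g z → grundy g y z = (y ^^^ (z + s)) - s)
    (gms : ℕ → ℕ) (hgms : ∀ z, gms z = if s ≤ z then g (z - s) else g 0)
    (y z : ℕ) (hyz : y ≤ gms z) :
    grundy gms y z = y ^^^ z :=
  stmt_18_general s g hmono hG gms hgms y z hyz
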